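/- arXiv:1801.04632 — 3 statements merged into one kernel-verified Lean document; each statement's English description precedes it below -/
import Mathlib

section
/- Let R be a commutative ring, n a positive integer, ζ an invertible element of R, A a symmetric n × n matrix over R, v : Fin n → R a vector, and r ∈ R. Let B be the symmetric (n+2) × (n+2) matrix over R given in block form by B(0,0) = 0, B(0,1) = B(1,0) = ζ, B(0, j+2) = B(j+2, 0) = 0 for all j ∈ Fin n, B(1,1) = r, B(1, j+2) = B(j+2, 1) = v(j) for all j ∈ Fin n, and B(i+2, j+2) = A(i,j) for all i, j ∈ Fin n. Define u : Fin (n+2) → R by u(0) = u(1) = 0 and u(i+2) = ζ⁻¹·v(i) for i ∈ Fin n, and let w : Fin (n+2) → R be the indicator vector of the index 0. Then (1 − u·wᵀ)·B·(1 − w·uᵀ) equals the block direct sum of the 2 × 2 matrix [[0, ζ], [ζ, r]] and A; moreover the matrix 1 − u·wᵀ is invertible with inverse 1 + u·wᵀ. In particular, B is congruent to [[0, ζ], [ζ, r]] ⊞ A. -/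
open Matrix

private lemma fin_tri (n : ℕ) (i : Fin (n+2)) :
    i = 0 ∨ i = 1 ∨ ∃ k : Fin n, i = k.succ.succ := by
  induction i using Fin.cases with
  | zero => left; rfl
  | succ i =>
    induction i using Fin.cases with
    | zero => right; left; rfl
    | succ i => right; right; exact ⟨i, rfl⟩

theorem congruent_to_direct_sum
    {R : Type*} [CommRing R] (n : ℕ) (hn : 0 < n)
    (ζ ζ' : R) (hζ : ζ * ζ' = 1)
    (A : Matrix (Fin n) (Fin n) R) (hA : A.IsSymm)
    (v : Fin n → R) (r : R)
    (B : Matrix (Fin (n + 2)) (Fin (n + 2)) R)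
    (hB00 : B 0 0 = 0) (hB01 : B 0 1 = ζ) (hB10 : B 1 0 = ζ)
    (hB0j : ∀ j : Fin n, B 0 j.succ.succ = 0)
    (hBj0 : ∀ j : Fin n, B j.succ.succ 0 = 0)
    (hB11 : B 1 1 = r)
    (hB1j : ∀ j : Fin n, B 1 j.succ.succ = v j)
    (hBj1 : ∀ j : Fin n, B j.succ.succ 1 = v j)
    (hBA : ∀ i j : Fin n, B i.succ.succ j.succ.succ = A i j)
    (u : Fin (n + 2) → R)
    (hu0 : u 0 = 0) (hu1 : u 1 = 0)
    (hui : ∀ i : Fin n, u i.succ.succ = ζ' * v i)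
    (w : Fin (n + 2) → R)
    (hw : w = fun i => if i = 0 then 1 else 0) :
    (1 - Matrix.vecMulVec u w) * B * (1 - Matrix.vecMulVec w u) =
      Matrix.reindex (finSumFinEquiv.trans (finCongr (Nat.add_comm 2 n)))
        (finSumFinEquiv.trans (finCongr (Nat.add_comm 2 n)))
        (Matrix.fromBlocks !![0, ζ; ζ, r] 0 0 A) ∧
    (1 - Matrix.vecMulVec u w) * (1 + Matrix.vecMulVec u w) = 1 ∧
    (1 + Matrix.vecMulVec u w) * (1 - Matrix.vecMulVec u w) = 1 ∧
    ∃ M : Matrix (Fin (n + 2)) (Fin (n + 2)) R, IsUnit M ∧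
      Mᵀ * B * M =
        Matrix.reindex (finSumFinEquiv.trans (finCongr (Nat.add_comm 2 n)))
          (finSumFinEquiv.trans (finCongr (Nat.add_comm 2 n)))
          (Matrix.fromBlocks !![0, ζ; ζ, r] 0 0 A) := by
  set U := Matrix.vecMulVec u w with hU
  set W := Matrix.vecMulVec w u with hW
  -- entry computations
  have hUB : ∀ i j, (U * B) i j = u i * B 0 j := by
    intro i j
    simp [hU, mul_apply, vecMulVec_apply, hw, mul_ite, ite_mul, mul_assoc]
  have hBW : ∀ i j, (B * W) i j = B i 0 * u j := by
    intro i j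
    simp [hW, mul_apply, vecMulVec_apply, hw, mul_ite, ite_mul]
  have hUBW : ∀ i j, (U * B * W) i j = u i * B 0 0 * u j := by
    intro i j
    have : U * B * W = U * (B * W) := by rw [mul_assoc]
    rw [this]
    simp [hU, mul_apply, vecMulVec_apply, hw, mul_ite, ite_mul, hBW, mul_assoc]
    rw [← mul_apply, hBW]
  have hentry : ∀ i j, ((1 - U) * B * (1 - W)) i j
      = B i j - u i * B 0 j - B i 0 * u j + u i * B 0 0 * u j := by
    intro i j
    have : (1 - U) * B * (1 - W) = B - U * B - B * W + U * B * W := by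
      noncomm_ring
    rw [this]
    simp [Matrix.sub_apply, Matrix.add_apply, hUB, hBW, hUBW]
  have hUU : U * U = 0 := by
    ext i j
    simp [hU, mul_apply, vecMulVec_apply, hw, mul_ite, ite_mul, hu0]
  have hinv1 : (1 - U) * (1 + U) = 1 := by
    have : (1 - U) * (1 + U) = 1 - U * U := by noncomm_ring
    rw [this, hUU, sub_zero]
  have hinv2 : (1 + U) * (1 - U) = 1 := by
    have : (1 + U) * (1 - U) = 1 - U * U := by noncomm_ring
    rw [this, hUU, sub_zero]
  -- the reindexing equivalence values
  set e : Fin 2 ⊕ Fin n ≃ Fin (n + 2) :=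
    finSumFinEquiv.trans (finCongr (Nat.add_comm 2 n)) with he
  have he0 : e (Sum.inl 0) = 0 := rfl
  have he1 : e (Sum.inl 1) = 1 := rfl
  have hek : ∀ k : Fin n, e (Sum.inr k) = k.succ.succ := by
    intro k
    apply Fin.ext
    simp [he, finSumFinEquiv, Fin.natAdd]
    omega
  have hs0 : e.symm (0 : Fin (n + 2)) = Sum.inl 0 := by
    rw [Equiv.symm_apply_eq]; exact he0.symm
  have hs1 : e.symm (1 : Fin (n + 2)) = Sum.inl 1 := by
    rw [Equiv.symm_apply_eq]; exact he1.symm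
  have hsk : ∀ k : Fin n, e.symm k.succ.succ = Sum.inr k := by
    intro k; rw [Equiv.symm_apply_eq]; exact (hek k).symm
  have hmain : (1 - U) * B * (1 - W) =
      Matrix.reindex e e (Matrix.fromBlocks !![0, ζ; ζ, r] 0 0 A) := by
    ext i j
    rcases fin_tri n i with hi | hi | ⟨k, hi⟩ <;>
      rcases fin_tri n j with hj | hj | ⟨l, hj⟩ <;>
        subst hi hj <;>
        simp [hentry, reindex_apply, submatrix_apply, hs0, hs1, hsk,
          hB00, hB01, hB10, hB11, hB0j, hBj0, hB1j, hBj1, hBA,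
          hu0, hu1, hui] <;>
        first
          | linear_combination (-v l) * hζ
          | linear_combination (-v k) * hζ
  have hWW : W * W = 0 := by
    ext i j
    simp [hW, mul_apply, vecMulVec_apply, hw, mul_ite, ite_mul, hu0]
  have hMT : (1 - W)ᵀ = 1 - U := by
    rw [transpose_sub, transpose_one]
    congr 1
    ext i j
    simp [hU, hW, vecMulVec_apply, transpose_apply, mul_comm]
  refine ⟨hmain, hinv1, hinv2, 1 - W, ?_, ?_⟩
  · have h1 : (1 - W) * (1 + W) = 1 := by
      have : (1 - W) * (1 + W) = 1 - W * W := by noncomm_ring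
      rw [this, hWW, sub_zero]
    have h2 : (1 + W) * (1 - W) = 1 := by
      have : (1 + W) * (1 - W) = 1 - W * W := by noncomm_ring
      rw [this, hWW, sub_zero]
    exact ⟨⟨1 - W, 1 + W, h1, h2⟩, rfl⟩
  · rw [hMT]; exact hmain
end

section
/- Let R be a commutative ring, X and Y finite types, and f : X → Y a map. Let w : X → R be f-compatible, A a symmetric X × X matrix over R, and v : X → R any vector. Then f_*((1 + v·wᵀ)·A·(1 + w·vᵀ)) = (1 + ṽ·w̃ᵀ)·f_*(A)·(1 + w̃·ṽᵀ), where ṽ = f_*(v) and w̃ = f_*(w). -/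
/-- The push-forward of a vector `v : X → R` along `f : X → Y`:
`f_*(v)(y) = ∑_{x ∈ f⁻¹(y)} v(x)`. -/
def pushVec {X Y R : Type*} [Fintype X] [DecidableEq Y] [AddCommMonoid R]
    (f : X → Y) (v : X → R) : Y → R :=
  fun y => ∑ x : X, if f x = y then v x else 0

/-- The push-forward of a matrix `A : X × X → R` along `f : X → Y`:
`f_*(A)(y,y') = ∑_{x ∈ f⁻¹(y), x' ∈ f⁻¹(y')} A(x,x')`. -/
def pushMat {X Y R : Type*} [Fintype X] [DecidableEq Y] [AddCommMonoid R]
    (f : X → Y) (A : Matrix X X R) : Matrix Y Y R :=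
  Matrix.of fun y y' => ∑ x : X, ∑ x' : X, if f x = y ∧ f x' = y' then A x x' else 0

open Matrix

section Aux

set_option linter.unusedSectionVars false

variable {R X Y : Type*} [CommRing R] [Fintype X] [DecidableEq X] [Fintype Y] [DecidableEq Y]
  (f : X → Y)

/-- Indicator matrix of `f`. -/
def indMat (f : X → Y) : Matrix Y X R :=
  Matrix.of fun y x => if f x = y then 1 else 0

lemma pushVec_eq (v : X → R) : pushVec f v = (indMat f).mulVec v := by
  funext y
  simp [pushVec, indMat, Matrix.mulVec, dotProduct, ite_mul, boole_mul]

lemma pushMat_eq (A : Matrix X X R) :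
    pushMat f A = indMat (R := R) f * A * Matrix.transpose (indMat (R := R) f) := by
  ext y y'
  simp only [pushMat, Matrix.of_apply, Matrix.mul_apply, Matrix.transpose_apply, indMat,
    Finset.sum_mul, Finset.mul_sum]
  rw [Finset.sum_comm]
  apply Finset.sum_congr rfl; intro x' _
  apply Finset.sum_congr rfl; intro x _
  by_cases h1 : f x = y <;> by_cases h2 : f x' = y' <;> simp [h1, h2]

lemma vecMulVec_push (v u : X → R) :
    Matrix.vecMulVec (pushVec f v) (pushVec f u) =
      indMat (R := R) f * Matrix.vecMulVec v u * Matrix.transpose (indMat (R := R) f) := by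
  ext y y'
  simp only [Matrix.vecMulVec_apply, pushVec_eq, Matrix.mul_apply, Matrix.transpose_apply,
    Matrix.mulVec, dotProduct, Finset.sum_mul, Finset.mul_sum]
  apply Finset.sum_congr rfl; intro x _
  apply Finset.sum_congr rfl; intro x' _
  simp [indMat]

lemma indMat_gram (a b : X) :
    (Matrix.transpose (indMat (R := R) f) * indMat (R := R) f : Matrix X X R) a b = if f b = f a then 1 else 0 := by
  simp only [Matrix.mul_apply, Matrix.transpose_apply, indMat, Matrix.of_apply, ite_mul, one_mul,
    zero_mul]
  simp [Finset.sum_ite_eq]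

end Aux

theorem pushforward_congruence
    {R X Y : Type*} [CommRing R] [Fintype X] [DecidableEq X] [Fintype Y] [DecidableEq Y]
    (f : X → Y) (w : X → R)
    (hw : ∀ x : X, pushVec f w (f x) = w x)
    (A : Matrix X X R) (hA : A.IsSymm) (v : X → R) :
    pushMat f ((1 + Matrix.vecMulVec v w) * A * (1 + Matrix.vecMulVec w v)) =
      (1 + Matrix.vecMulVec (pushVec f v) (pushVec f w)) * pushMat f A *
        (1 + Matrix.vecMulVec (pushVec f w) (pushVec f v)) := by
  set P : Matrix Y X R := indMat f with hP
  have hkey : ∀ x : X, (∑ x' : X, if f x' = f x then w x' else 0) = w x := by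
    intro x; exact hw x
  have h2 : Matrix.vecMulVec v w * (Pᵀ * P) = Matrix.vecMulVec v w := by
    ext a c
    rw [Matrix.mul_apply]
    simp only [Matrix.vecMulVec_apply, hP, indMat_gram, mul_ite, mul_one, mul_zero]
    calc (∑ b : X, if f c = f b then v a * w b else 0)
        = v a * ∑ b : X, if f b = f c then w b else 0 := by
          rw [Finset.mul_sum]
          apply Finset.sum_congr rfl; intro b _
          by_cases h : f c = f b <;> simp [h, eq_comm]
      _ = v a * w c := by rw [hkey c]
  have h3 : (Pᵀ * P) * Matrix.vecMulVec w v = Matrix.vecMulVec w v := by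
    ext a c
    rw [Matrix.mul_apply]
    simp only [Matrix.vecMulVec_apply, hP, indMat_gram, ite_mul, one_mul, zero_mul]
    calc (∑ b : X, if f b = f a then w b * v c else 0)
        = (∑ b : X, if f b = f a then w b else 0) * v c := by
          rw [Finset.sum_mul]
          apply Finset.sum_congr rfl; intro b _
          by_cases h : f b = f a <;> simp [h]
      _ = w a * v c := by rw [hkey a]
  rw [pushMat_eq, pushMat_eq, vecMulVec_push, vecMulVec_push, ← hP]
  have expand : (1 + P * Matrix.vecMulVec v w * Pᵀ) * (P * A * Pᵀ) *
      (1 + P * Matrix.vecMulVec w v * Pᵀ) =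
      P * A * Pᵀ + P * (Matrix.vecMulVec v w * (Pᵀ * P)) * A * Pᵀ +
        P * A * ((Pᵀ * P) * Matrix.vecMulVec w v) * Pᵀ +
        P * (Matrix.vecMulVec v w * (Pᵀ * P)) * A * ((Pᵀ * P) * Matrix.vecMulVec w v) * Pᵀ := by
    simp only [Matrix.add_mul, Matrix.mul_add, Matrix.one_mul, Matrix.mul_one, Matrix.mul_assoc]
    abel
  rw [expand, h2, h3]
  simp only [Matrix.add_mul, Matrix.mul_add, Matrix.one_mul, Matrix.mul_one, Matrix.mul_assoc]
  abel
end

section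
/- Let R be a commutative ring containing an element x such that 2x+1 is invertible in R. Define the symmetric 7 × 7 matrices over R: M_L with rows (4x²−1, 2x, 1, 2x, 1, 2x, 1), (2x, 2, x, 1, 0, 1, x), (1, x, 2x²−1, x, 0, 0, 0), (2x, 1, x, 2x², x, 1, 0), (1, 0, 0, x, 1, x, 0), (2x, 1, 0, 1, x, 2x², x), (1, x, 0, 0, 0, x, 2x²−1); and M_R with rows (4x²−1, 1, 2x, 1, 2x, 1, 2x), (1, 1, x, 0, 0, 0, x), (2x, x, 2x², x, 1, 0, 1), (1, 0, x, 2x²−1, x, 0, 0), (2x, 0, 1, x, 2, x, 1), (1, 0, 0, 0, x, 2x²−1, x), (2x, x, 1, 0, 1, x, 2x²). Let v : Fin 7 → R be the vector (0, (2x+1)⁻¹, −(2x+1)⁻¹, (2x+1)⁻¹, −(2x+1)⁻¹, (2x+1)⁻¹, −(2x+1)⁻¹) and let w : Fin 7 → R be the indicator vector of the index 0. Then M_L = (1 + v·wᵀ)·M_R·(1 + w·vᵀ); moreover ⟨w, v⟩ = 0, so that 1 + v·wᵀ is invertible with inverse 1 − v·wᵀ, and hence M_L and M_R are congruent over R. 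-/
open Matrix

private lemma vec7_0 {α : Type*} (x0 x1 x2 x3 x4 x5 x6 : α) : ![x0,x1,x2,x3,x4,x5,x6] 0 = x0 := rfl
private lemma vec7_0' {α : Type*} (x0 x1 x2 x3 x4 x5 x6 : α) (h : 0 < 7) : ![x0,x1,x2,x3,x4,x5,x6] ⟨0,h⟩ = x0 := rfl
private lemma vec7_1 {α : Type*} (x0 x1 x2 x3 x4 x5 x6 : α) : ![x0,x1,x2,x3,x4,x5,x6] 1 = x1 := rfl
private lemma vec7_1' {α : Type*} (x0 x1 x2 x3 x4 x5 x6 : α) (h : 1 < 7) : ![x0,x1,x2,x3,x4,x5,x6] ⟨1,h⟩ = x1 := rfl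
private lemma vec7_2 {α : Type*} (x0 x1 x2 x3 x4 x5 x6 : α) : ![x0,x1,x2,x3,x4,x5,x6] 2 = x2 := rfl
private lemma vec7_2' {α : Type*} (x0 x1 x2 x3 x4 x5 x6 : α) (h : 2 < 7) : ![x0,x1,x2,x3,x4,x5,x6] ⟨2,h⟩ = x2 := rfl
private lemma vec7_3 {α : Type*} (x0 x1 x2 x3 x4 x5 x6 : α) : ![x0,x1,x2,x3,x4,x5,x6] 3 = x3 := rfl
private lemma vec7_3' {α : Type*} (x0 x1 x2 x3 x4 x5 x6 : α) (h : 3 < 7) : ![x0,x1,x2,x3,x4,x5,x6] ⟨3,h⟩ = x3 := rfl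
private lemma vec7_4 {α : Type*} (x0 x1 x2 x3 x4 x5 x6 : α) : ![x0,x1,x2,x3,x4,x5,x6] 4 = x4 := rfl
private lemma vec7_4' {α : Type*} (x0 x1 x2 x3 x4 x5 x6 : α) (h : 4 < 7) : ![x0,x1,x2,x3,x4,x5,x6] ⟨4,h⟩ = x4 := rfl
private lemma vec7_5 {α : Type*} (x0 x1 x2 x3 x4 x5 x6 : α) : ![x0,x1,x2,x3,x4,x5,x6] 5 = x5 := rfl
private lemma vec7_5' {α : Type*} (x0 x1 x2 x3 x4 x5 x6 : α) (h : 5 < 7) : ![x0,x1,x2,x3,x4,x5,x6] ⟨5,h⟩ = x5 := rfl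
private lemma vec7_6 {α : Type*} (x0 x1 x2 x3 x4 x5 x6 : α) : ![x0,x1,x2,x3,x4,x5,x6] 6 = x6 := rfl
private lemma vec7_6' {α : Type*} (x0 x1 x2 x3 x4 x5 x6 : α) (h : 6 < 7) : ![x0,x1,x2,x3,x4,x5,x6] ⟨6,h⟩ = x6 := rfl

private lemma fmk0 (h : 0 < 7) : (⟨0,h⟩ : Fin 7) = 0 := rfl
private lemma fmk1 (h : 1 < 7) : (⟨1,h⟩ : Fin 7) = 1 := rfl
private lemma fmk2 (h : 2 < 7) : (⟨2,h⟩ : Fin 7) = 2 := rfl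
private lemma fmk3 (h : 3 < 7) : (⟨3,h⟩ : Fin 7) = 3 := rfl
private lemma fmk4 (h : 4 < 7) : (⟨4,h⟩ : Fin 7) = 4 := rfl
private lemma fmk5 (h : 5 < 7) : (⟨5,h⟩ : Fin 7) = 5 := rfl
private lemma fmk6 (h : 6 < 7) : (⟨6,h⟩ : Fin 7) = 6 := rfl

set_option maxHeartbeats 1000000 in
theorem reidemeisterIII_congruence
    {R : Type*} [CommRing R] (x a : R) (ha : (2 * x + 1) * a = 1)
    (ML MR : Matrix (Fin 7) (Fin 7) R)
    (hML : ML = !![4*x^2 - 1, 2*x, 1, 2*x, 1, 2*x, 1;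
                   2*x, 2, x, 1, 0, 1, x;
                   1, x, 2*x^2 - 1, x, 0, 0, 0;
                   2*x, 1, x, 2*x^2, x, 1, 0;
                   1, 0, 0, x, 1, x, 0;
                   2*x, 1, 0, 1, x, 2*x^2, x;
                   1, x, 0, 0, 0, x, 2*x^2 - 1])
    (hMR : MR = !![4*x^2 - 1, 1, 2*x, 1, 2*x, 1, 2*x;
                   1, 1, x, 0, 0, 0, x;
                   2*x, x, 2*x^2, x, 1, 0, 1;
                   1, 0, x, 2*x^2 - 1, x, 0, 0;
                   2*x, 0, 1, x, 2, x, 1;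
                   1, 0, 0, 0, x, 2*x^2 - 1, x;
                   2*x, x, 1, 0, 1, x, 2*x^2])
    (v w : Fin 7 → R)
    (hv : v = ![0, a, -a, a, -a, a, -a])
    (hw : w = ![1, 0, 0, 0, 0, 0, 0]) :
    ML = (1 + Matrix.vecMulVec v w) * MR * (1 + Matrix.vecMulVec w v) ∧
    (∑ i : Fin 7, w i * v i = 0) ∧
    (1 + Matrix.vecMulVec v w) * (1 - Matrix.vecMulVec v w) = 1 ∧
    (1 - Matrix.vecMulVec v w) * (1 + Matrix.vecMulVec v w) = 1 ∧
    ∃ M : Matrix (Fin 7) (Fin 7) R, IsUnit M ∧ Mᵀ * MR * M = ML := by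
  subst hML hMR hv hw
  have h1 : (1 + Matrix.vecMulVec ![0, a, -a, a, -a, a, -a] ![1, 0, 0, 0, 0, 0, 0]) *
      (!![4*x^2 - 1, 1, 2*x, 1, 2*x, 1, 2*x;
       1, 1, x, 0, 0, 0, x;
       2*x, x, 2*x^2, x, 1, 0, 1;
       1, 0, x, 2*x^2 - 1, x, 0, 0;
       2*x, 0, 1, x, 2, x, 1;
       1, 0, 0, 0, x, 2*x^2 - 1, x;
       2*x, x, 1, 0, 1, x, 2*x^2] : Matrix (Fin 7) (Fin 7) R) =
      (!![4*x^2 - 1, 1, 2*x, 1, 2*x, 1, 2*x;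
       1 + (a) * (4*x^2 - 1), 1 + (a) * (1), x + (a) * (2*x), (a) * (1), (a) * (2*x), (a) * (1), x + (a) * (2*x);
       2*x + (-a) * (4*x^2 - 1), x + (-a) * (1), 2*x^2 + (-a) * (2*x), x + (-a) * (1), 1 + (-a) * (2*x), (-a) * (1), 1 + (-a) * (2*x);
       1 + (a) * (4*x^2 - 1), (a) * (1), x + (a) * (2*x), 2*x^2 - 1 + (a) * (1), x + (a) * (2*x), (a) * (1), (a) * (2*x);
       2*x + (-a) * (4*x^2 - 1), (-a) * (1), 1 + (-a) * (2*x), x + (-a) * (1), 2 + (-a) * (2*x), x + (-a) * (1), 1 + (-a) * (2*x);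
       1 + (a) * (4*x^2 - 1), (a) * (1), (a) * (2*x), (a) * (1), x + (a) * (2*x), 2*x^2 - 1 + (a) * (1), x + (a) * (2*x);
       2*x + (-a) * (4*x^2 - 1), x + (-a) * (1), 1 + (-a) * (2*x), (-a) * (1), 1 + (-a) * (2*x), x + (-a) * (1), 2*x^2 + (-a) * (2*x)] : Matrix (Fin 7) (Fin 7) R) := by
    ext i j
    fin_cases i <;> fin_cases j <;>
      simp only [Matrix.mul_apply, Fin.sum_univ_seven, Matrix.vecMulVec_apply,
        Matrix.one_apply, Matrix.add_apply, Matrix.of_apply, Fin.mk_zero, Fin.mk_one,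
        vec7_0, vec7_1, vec7_2, vec7_3, vec7_4, vec7_5, vec7_6,
        vec7_0', vec7_1', vec7_2', vec7_3', vec7_4', vec7_5', vec7_6',
        fmk0, fmk1, fmk2, fmk3, fmk4, fmk5, fmk6, Fin.reduceEq, reduceIte, Fin.mk.injEq, Nat.reduceEqDiff, OfNat.ofNat_ne_zero,
        OfNat.ofNat_ne_one, Fin.isValue] <;> ring
  have h2 : (!![4*x^2 - 1, 1, 2*x, 1, 2*x, 1, 2*x;
       1 + (a) * (4*x^2 - 1), 1 + (a) * (1), x + (a) * (2*x), (a) * (1), (a) * (2*x), (a) * (1), x + (a) * (2*x);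
       2*x + (-a) * (4*x^2 - 1), x + (-a) * (1), 2*x^2 + (-a) * (2*x), x + (-a) * (1), 1 + (-a) * (2*x), (-a) * (1), 1 + (-a) * (2*x);
       1 + (a) * (4*x^2 - 1), (a) * (1), x + (a) * (2*x), 2*x^2 - 1 + (a) * (1), x + (a) * (2*x), (a) * (1), (a) * (2*x);
       2*x + (-a) * (4*x^2 - 1), (-a) * (1), 1 + (-a) * (2*x), x + (-a) * (1), 2 + (-a) * (2*x), x + (-a) * (1), 1 + (-a) * (2*x);
       1 + (a) * (4*x^2 - 1), (a) * (1), (a) * (2*x), (a) * (1), x + (a) * (2*x), 2*x^2 - 1 + (a) * (1), x + (a) * (2*x);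
       2*x + (-a) * (4*x^2 - 1), x + (-a) * (1), 1 + (-a) * (2*x), (-a) * (1), 1 + (-a) * (2*x), x + (-a) * (1), 2*x^2 + (-a) * (2*x)] : Matrix (Fin 7) (Fin 7) R) *
      (1 + Matrix.vecMulVec ![1, 0, 0, 0, 0, 0, 0] ![0, a, -a, a, -a, a, -a]) =
      (!![4*x^2 - 1, 1 + (4*x^2 - 1) * (a), 2*x + (4*x^2 - 1) * (-a), 1 + (4*x^2 - 1) * (a), 2*x + (4*x^2 - 1) * (-a), 1 + (4*x^2 - 1) * (a), 2*x + (4*x^2 - 1) * (-a);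
       1 + (a) * (4*x^2 - 1), 1 + (a) * (1) + (1 + (a) * (4*x^2 - 1)) * (a), x + (a) * (2*x) + (1 + (a) * (4*x^2 - 1)) * (-a), (a) * (1) + (1 + (a) * (4*x^2 - 1)) * (a), (a) * (2*x) + (1 + (a) * (4*x^2 - 1)) * (-a), (a) * (1) + (1 + (a) * (4*x^2 - 1)) * (a), x + (a) * (2*x) + (1 + (a) * (4*x^2 - 1)) * (-a);
       2*x + (-a) * (4*x^2 - 1), x + (-a) * (1) + (2*x + (-a) * (4*x^2 - 1)) * (a), 2*x^2 + (-a) * (2*x) + (2*x + (-a) * (4*x^2 - 1)) * (-a), x + (-a) * (1) + (2*x + (-a) * (4*x^2 - 1)) * (a), 1 + (-a) * (2*x) + (2*x + (-a) * (4*x^2 - 1)) * (-a), (-a) * (1) + (2*x + (-a) * (4*x^2 - 1)) * (a), 1 + (-a) * (2*x) + (2*x + (-a) * (4*x^2 - 1)) * (-a);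
       1 + (a) * (4*x^2 - 1), (a) * (1) + (1 + (a) * (4*x^2 - 1)) * (a), x + (a) * (2*x) + (1 + (a) * (4*x^2 - 1)) * (-a), 2*x^2 - 1 + (a) * (1) + (1 + (a) * (4*x^2 - 1)) * (a), x + (a) * (2*x) + (1 + (a) * (4*x^2 - 1)) * (-a), (a) * (1) + (1 + (a) * (4*x^2 - 1)) * (a), (a) * (2*x) + (1 + (a) * (4*x^2 - 1)) * (-a);
       2*x + (-a) * (4*x^2 - 1), (-a) * (1) + (2*x + (-a) * (4*x^2 - 1)) * (a), 1 + (-a) * (2*x) + (2*x + (-a) * (4*x^2 - 1)) * (-a), x + (-a) * (1) + (2*x + (-a) * (4*x^2 - 1)) * (a), 2 + (-a) * (2*x) + (2*x + (-a) * (4*x^2 - 1)) * (-a), x + (-a) * (1) + (2*x + (-a) * (4*x^2 - 1)) * (a), 1 + (-a) * (2*x) + (2*x + (-a) * (4*x^2 - 1)) * (-a);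
       1 + (a) * (4*x^2 - 1), (a) * (1) + (1 + (a) * (4*x^2 - 1)) * (a), (a) * (2*x) + (1 + (a) * (4*x^2 - 1)) * (-a), (a) * (1) + (1 + (a) * (4*x^2 - 1)) * (a), x + (a) * (2*x) + (1 + (a) * (4*x^2 - 1)) * (-a), 2*x^2 - 1 + (a) * (1) + (1 + (a) * (4*x^2 - 1)) * (a), x + (a) * (2*x) + (1 + (a) * (4*x^2 - 1)) * (-a);
       2*x + (-a) * (4*x^2 - 1), x + (-a) * (1) + (2*x + (-a) * (4*x^2 - 1)) * (a), 1 + (-a) * (2*x) + (2*x + (-a) * (4*x^2 - 1)) * (-a), (-a) * (1) + (2*x + (-a) * (4*x^2 - 1)) * (a), 1 + (-a) * (2*x) + (2*x + (-a) * (4*x^2 - 1)) * (-a), x + (-a) * (1) + (2*x + (-a) * (4*x^2 - 1)) * (a), 2*x^2 + (-a) * (2*x) + (2*x + (-a) * (4*x^2 - 1)) * (-a)] : Matrix (Fin 7) (Fin 7) R) := by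
    ext i j
    fin_cases i <;> fin_cases j <;>
      simp only [Matrix.mul_apply, Fin.sum_univ_seven, Matrix.vecMulVec_apply,
        Matrix.one_apply, Matrix.add_apply, Matrix.of_apply, Fin.mk_zero, Fin.mk_one,
        vec7_0, vec7_1, vec7_2, vec7_3, vec7_4, vec7_5, vec7_6,
        vec7_0', vec7_1', vec7_2', vec7_3', vec7_4', vec7_5', vec7_6',
        fmk0, fmk1, fmk2, fmk3, fmk4, fmk5, fmk6, Fin.reduceEq, reduceIte, Fin.mk.injEq, Nat.reduceEqDiff, OfNat.ofNat_ne_zero,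
        OfNat.ofNat_ne_one, Fin.isValue] <;> ring
  have key : (!![4*x^2 - 1, 2*x, 1, 2*x, 1, 2*x, 1;
       2*x, 2, x, 1, 0, 1, x;
       1, x, 2*x^2 - 1, x, 0, 0, 0;
       2*x, 1, x, 2*x^2, x, 1, 0;
       1, 0, 0, x, 1, x, 0;
       2*x, 1, 0, 1, x, 2*x^2, x;
       1, x, 0, 0, 0, x, 2*x^2 - 1] : Matrix (Fin 7) (Fin 7) R) =
      (1 + Matrix.vecMulVec ![0, a, -a, a, -a, a, -a] ![1, 0, 0, 0, 0, 0, 0]) *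
      !![4*x^2 - 1, 1, 2*x, 1, 2*x, 1, 2*x;
       1, 1, x, 0, 0, 0, x;
       2*x, x, 2*x^2, x, 1, 0, 1;
       1, 0, x, 2*x^2 - 1, x, 0, 0;
       2*x, 0, 1, x, 2, x, 1;
       1, 0, 0, 0, x, 2*x^2 - 1, x;
       2*x, x, 1, 0, 1, x, 2*x^2] *
      (1 + Matrix.vecMulVec ![1, 0, 0, 0, 0, 0, 0] ![0, a, -a, a, -a, a, -a]) := by
    rw [h1, h2]
    ext i j
    fin_cases i <;> fin_cases j <;>
      simp only [Matrix.mul_apply, Fin.sum_univ_seven, Matrix.vecMulVec_apply,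
        Matrix.one_apply, Matrix.add_apply, Matrix.of_apply, Fin.mk_zero, Fin.mk_one,
        vec7_0, vec7_1, vec7_2, vec7_3, vec7_4, vec7_5, vec7_6,
        vec7_0', vec7_1', vec7_2', vec7_3', vec7_4', vec7_5', vec7_6',
        fmk0, fmk1, fmk2, fmk3, fmk4, fmk5, fmk6, Fin.reduceEq, reduceIte, Fin.mk.injEq, Nat.reduceEqDiff, OfNat.ofNat_ne_zero,
        OfNat.ofNat_ne_one, Fin.isValue] <;>
      first
        | ring1
        | linear_combination (1 - 2*x) * ha
        | linear_combination (2*x - 1) * ha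
        | linear_combination (1 + (1 - 2*x)*a) * ha
        | linear_combination (-1 + (1 - 2*x)*a) * ha
        | linear_combination ((2*x - 1)*a) * ha
  have hsum : (∑ i : Fin 7, (![1, 0, 0, 0, 0, 0, 0] : Fin 7 → R) i *
      (![0, a, -a, a, -a, a, -a] : Fin 7 → R) i) = 0 := by
    simp [Fin.sum_univ_seven, vec7_0, vec7_1, vec7_2, vec7_3, vec7_4, vec7_5, vec7_6]
  have hvv : Matrix.vecMulVec (![0, a, -a, a, -a, a, -a] : Fin 7 → R) ![1, 0, 0, 0, 0, 0, 0] *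
      Matrix.vecMulVec (![0, a, -a, a, -a, a, -a] : Fin 7 → R) ![1, 0, 0, 0, 0, 0, 0] = 0 := by
    ext i j
    simp only [Matrix.mul_apply, Fin.sum_univ_seven, Matrix.vecMulVec_apply, Matrix.zero_apply,
      vec7_0, vec7_1, vec7_2, vec7_3, vec7_4, vec7_5, vec7_6]
    ring
  have hww : Matrix.vecMulVec (![1, 0, 0, 0, 0, 0, 0] : Fin 7 → R) ![0, a, -a, a, -a, a, -a] *
      Matrix.vecMulVec (![1, 0, 0, 0, 0, 0, 0] : Fin 7 → R) ![0, a, -a, a, -a, a, -a] = 0 := by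
    ext i j
    simp only [Matrix.mul_apply, Fin.sum_univ_seven, Matrix.vecMulVec_apply, Matrix.zero_apply,
      vec7_0, vec7_1, vec7_2, vec7_3, vec7_4, vec7_5, vec7_6]
    ring
  have vmvt : ∀ (u v : Fin 7 → R), (Matrix.vecMulVec u v)ᵀ = Matrix.vecMulVec v u := by
    intro u v
    ext i j
    simp [Matrix.vecMulVec_apply, Matrix.transpose_apply, mul_comm]
  have hWT : (1 + Matrix.vecMulVec (![1, 0, 0, 0, 0, 0, 0] : Fin 7 → R) ![0, a, -a, a, -a, a, -a])ᵀ
      = 1 + Matrix.vecMulVec (![0, a, -a, a, -a, a, -a] : Fin 7 → R) ![1, 0, 0, 0, 0, 0, 0] := by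
    rw [Matrix.transpose_add, Matrix.transpose_one, vmvt]
  have e1 : ∀ V : Matrix (Fin 7) (Fin 7) R, V * V = 0 → (1 + V) * (1 - V) = 1 := by
    intro V h
    rw [mul_sub, mul_one, add_mul, one_mul, h, add_zero, add_sub_cancel_right]
  have e2 : ∀ V : Matrix (Fin 7) (Fin 7) R, V * V = 0 → (1 - V) * (1 + V) = 1 := by
    intro V h
    rw [sub_mul, one_mul, mul_add, mul_one, h, add_zero, add_sub_cancel_right]
  refine ⟨key, hsum, e1 _ hvv, e2 _ hvv,
    1 + Matrix.vecMulVec ![1, 0, 0, 0, 0, 0, 0] ![0, a, -a, a, -a, a, -a], ?_, ?_⟩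
  · exact ⟨⟨1 + Matrix.vecMulVec ![1, 0, 0, 0, 0, 0, 0] ![0, a, -a, a, -a, a, -a],
      1 - Matrix.vecMulVec ![1, 0, 0, 0, 0, 0, 0] ![0, a, -a, a, -a, a, -a],
      e1 _ hww, e2 _ hww⟩, rfl⟩
  · rw [hWT, key]
end
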